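/- arXiv:2505.10484 — 9 statements merged into one kernel-verified Lean document; each statement's English description precedes it below -/
import Mathlib

section
/- Let A₁,…,A_N be finite nonempty sets, Q_i : A_i → ℝ with advantages u_i(a_i) = Q_i(a_i) − max_{b} Q_i(b). Let Q : (Π_i A_i) → ℝ be a joint value. Then the individual utilities and Q satisfy IGM (joint argmax equals product of individual argmaxes) if and only if for every joint action a: (A(a) = 0 ↔ for all i, u_i(a_i) = 0), where A(a) = Q(a) − max_b Q(b) is the joint advantage. -/
lemma adv_zero_iff_max {α : Type*} [Fintype α] [Nonempty α] (f : α → ℝ) (a : α) :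
    f a - (⨆ b, f b) = 0 ↔ ∀ b, f b ≤ f a := by
  have hbdd : BddAbove (Set.range f) := (Set.finite_range f).bddAbove
  rw [sub_eq_zero]
  constructor
  · intro h b
    calc f b ≤ ⨆ b, f b := le_ciSup hbdd b
    _ = f a := h.symm
  · intro h
    exact le_antisymm (le_ciSup hbdd a) (ciSup_le h)

/-- Simplified advantage constraints characterize IGM: the joint argmax equals the
product of individual argmaxes iff, for every joint action, the joint advantage is
zero exactly when all individual advantages are zero. -/
theorem igm_iff_advantage_zero (N : ℕ) (A : Fin N → Type*)
    [∀ i, Fintype (A i)] [∀ i, Nonempty (A i)]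
    (Q : ∀ i, A i → ℝ) (Qj : (∀ i, A i) → ℝ) :
    ({a : ∀ i, A i | ∀ a' : ∀ i, A i, Qj a' ≤ Qj a} =
        Set.pi Set.univ (fun i => {x : A i | ∀ b, Q i b ≤ Q i x})) ↔
      (∀ a : ∀ i, A i,
        (Qj a - (⨆ a' : ∀ i, A i, Qj a') = 0 ↔
          ∀ i, Q i (a i) - (⨆ b : A i, Q i b) = 0)) := by
  rw [Set.ext_iff]
  apply forall_congr'
  intro a
  simp only [Set.mem_setOf_eq, Set.mem_pi, Set.mem_univ, forall_true_left,
    adv_zero_iff_max]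
end

section
/- Let A₁,…,A_N be finite nonempty sets, Q_i : A_i → ℝ with advantages u_i. Let f : ℝ_{≤0}^N → ℝ_{≤0} be a function with f(x) = 0 if and only if x = 0 (all coordinates zero). Let w : (Π A_i) → ℝ with w(a) > 0 for all a, and let b ∈ ℝ. Define Q_IGM(a) = w(a)·f(u₁(a₁),…,u_N(a_N)) + b. Then Q_IGM and the Q_i satisfy IGM, and moreover max_a Q_IGM(a) = b and Q_IGM(a) − b = w(a)·f(u₁(a₁),…,u_N(a_N)) for all a. -/
/-- Q_IGM(a) = w(a)·f(u(a)) + b satisfies IGM for any positive weight `w`, bias `b`,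
and nonpositive aggregator `f` vanishing exactly at zero; moreover its maximum is `b`
and its advantage is `w(a)·f(u(a))`. -/
theorem qigm_satisfies_igm (N : ℕ) (A : Fin N → Type*)
    [∀ i, Fintype (A i)] [∀ i, Nonempty (A i)]
    (Q : ∀ i, A i → ℝ) (f : (Fin N → ℝ) → ℝ)
    (hf_nonpos : ∀ x : Fin N → ℝ, (∀ i, x i ≤ 0) → f x ≤ 0)
    (hf_zero : ∀ x : Fin N → ℝ, (∀ i, x i ≤ 0) → (f x = 0 ↔ ∀ i, x i = 0))
    (w : (∀ i, A i) → ℝ) (hw : ∀ a, 0 < w a) (b : ℝ)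
    (Qigm : (∀ i, A i) → ℝ)
    (hQigm : ∀ a, Qigm a =
      w a * f (fun i => Q i (a i) - ⨆ c : A i, Q i c) + b) :
    ({a : ∀ i, A i | ∀ a' : ∀ i, A i, Qigm a' ≤ Qigm a} =
        Set.pi Set.univ (fun i => {x : A i | ∀ c, Q i c ≤ Q i x})) ∧
      (⨆ a : ∀ i, A i, Qigm a) = b ∧
      (∀ a, Qigm a - b = w a * f (fun i => Q i (a i) - ⨆ c : A i, Q i c)) := by
  set M : ∀ i, ℝ := fun i => ⨆ c : A i, Q i c with hM
  have hle : ∀ i (c : A i), Q i c ≤ M i := fun i c =>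
    le_ciSup (Set.Finite.bddAbove (Set.finite_range _)) c
  have hmax : ∀ i, ∃ m : A i, M i = Q i m := by
    intro i
    obtain ⟨m, hm⟩ := Finite.exists_max (Q i)
    exact ⟨m, le_antisymm (ciSup_le hm) (hle i m)⟩
  have hu : ∀ a : ∀ i, A i, ∀ i, Q i (a i) - M i ≤ 0 := fun a i =>
    sub_nonpos.2 (hle i (a i))
  have hb : ∀ a : ∀ i, A i, Qigm a ≤ b := by
    intro a
    rw [hQigm a]
    nlinarith [hf_nonpos _ (hu a), hw a]
  have heqb : ∀ a : ∀ i, A i, Qigm a = b ↔ ∀ i, ∀ c, Q i c ≤ Q i (a i) := by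
    intro a
    rw [hQigm a]
    constructor
    · intro h i c
      have hf0 : f (fun i => Q i (a i) - ⨆ c : A i, Q i c) = 0 := by
        have hz : w a * f (fun i => Q i (a i) - ⨆ c : A i, Q i c) = 0 := by linarith
        rcases mul_eq_zero.1 hz with h' | h'
        · exact absurd h' (ne_of_gt (hw a))
        · exact h'
      have := ((hf_zero _ (hu a)).1 hf0) i
      have : Q i (a i) = M i := by linarith
      calc Q i c ≤ M i := hle i c
        _ = Q i (a i) := this.symm
    · intro h
      have h0 : ∀ i, Q i (a i) - M i = 0 := fun i =>
        sub_eq_zero.2 (le_antisymm (hle i (a i)) (ciSup_le (h i)) : Q i (a i) = M i)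
      rw [(hf_zero _ (hu a)).2 h0, mul_zero, zero_add]
  choose m hm using hmax
  have hmb : Qigm m = b := (heqb m).2 fun i c => by rw [← hm i]; exact hle i c
  refine ⟨?_, ?_, fun a => by rw [hQigm a]; ring⟩
  · ext a
    simp only [Set.mem_setOf_eq, Set.mem_pi, Set.mem_univ, forall_true_left]
    constructor
    · intro h
      have : Qigm a = b := le_antisymm (hb a) (hmb ▸ h m)
      exact fun i c => (heqb a).1 this i c
    · intro h a'
      calc Qigm a' ≤ b := hb a'
        _ = Qigm a := ((heqb a).2 h).symm
  · exact le_antisymm (ciSup_le hb) (hmb ▸ le_ciSup (Set.Finite.bddAbove (Set.finite_range _)) m)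
end

section
/- Let A₁,…,A_N be finite nonempty sets, Q_i : A_i → ℝ with advantages u_i, and fix any f : ℝ_{≤0}^N → ℝ_{≤0} with f(x) = 0 ↔ x = 0. Then for any joint value Q : (Π A_i) → ℝ satisfying IGM with the Q_i, there exist a positive weight function w : (Π A_i) → ℝ_{>0} and a constant b ∈ ℝ such that Q(a) = w(a)·f(u₁(a₁),…,u_N(a_N)) + b for all joint actions a. -/
/-- Completeness: any joint value satisfying IGM with the `Q_i` can be written in the
form `w(a)·f(u(a)) + b` for a positive weight function `w` and constant `b`. -/
theorem qigm_complete (N : ℕ) (A : Fin N → Type*)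
    [∀ i, Fintype (A i)] [∀ i, Nonempty (A i)]
    (Q : ∀ i, A i → ℝ) (f : (Fin N → ℝ) → ℝ)
    (hf_nonpos : ∀ x : Fin N → ℝ, (∀ i, x i ≤ 0) → f x ≤ 0)
    (hf_zero : ∀ x : Fin N → ℝ, (∀ i, x i ≤ 0) → (f x = 0 ↔ ∀ i, x i = 0))
    (Qj : (∀ i, A i) → ℝ)
    (higm : {a : ∀ i, A i | ∀ a' : ∀ i, A i, Qj a' ≤ Qj a} =
        Set.pi Set.univ (fun i => {x : A i | ∀ c, Q i c ≤ Q i x})) :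
    ∃ (w : (∀ i, A i) → ℝ) (b : ℝ), (∀ a, 0 < w a) ∧
      ∀ a, Qj a = w a * f (fun i => Q i (a i) - ⨆ c : A i, Q i c) + b := by
  classical
  have hbdd : ∀ i, BddAbove (Set.range (Q i)) := fun i => (Set.finite_range _).bddAbove
  have hle : ∀ i (c : A i), Q i c ≤ ⨆ c, Q i c := fun i c => le_ciSup (hbdd i) c
  have hmaxiff : ∀ i (x : A i), (∀ c, Q i c ≤ Q i x) ↔ Q i x = ⨆ c, Q i c := by
    intro i x
    constructor
    · intro h; exact le_antisymm (hle i x) (ciSup_le h)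
    · intro h c; rw [h]; exact hle i c
  obtain ⟨a0, ha0⟩ := Finite.exists_max Qj
  set b := Qj a0 with hb
  have hQle : ∀ a, Qj a ≤ b := ha0
  have hunonpos : ∀ (a : ∀ i, A i) (i : Fin N),
      (fun i => Q i (a i) - ⨆ c : A i, Q i c) i ≤ 0 :=
    fun a i => sub_nonpos.mpr (hle i (a i))
  have hkey : ∀ a, f (fun i => Q i (a i) - ⨆ c : A i, Q i c) = 0 ↔ Qj a = b := by
    intro a
    rw [hf_zero _ (hunonpos a)]
    constructor
    · intro h
      have hmax : a ∈ Set.pi Set.univ (fun i => {x : A i | ∀ c, Q i c ≤ Q i x}) := by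
        intro i _
        exact (hmaxiff i (a i)).2 (by have := h i; simpa [sub_eq_zero] using this)
      rw [← higm] at hmax
      exact le_antisymm (hQle a) (hmax a0)
    · intro h
      have hmax : a ∈ {a : ∀ i, A i | ∀ a', Qj a' ≤ Qj a} := fun a' => h ▸ hQle a'
      rw [higm] at hmax
      intro i
      have := (hmaxiff i (a i)).1 (hmax i (Set.mem_univ i))
      simp [sub_eq_zero, this]
  refine ⟨fun a => if f (fun i => Q i (a i) - ⨆ c : A i, Q i c) = 0 then 1
      else (Qj a - b) / f (fun i => Q i (a i) - ⨆ c : A i, Q i c), b, ?_, ?_⟩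
  · intro a
    by_cases h : f (fun i => Q i (a i) - ⨆ c : A i, Q i c) = 0
    · simp [h]
    · simp only [h, if_false]
      have hfneg : f (fun i => Q i (a i) - ⨆ c : A i, Q i c) < 0 :=
        lt_of_le_of_ne (hf_nonpos _ (hunonpos a)) h
      have hQ : Qj a - b < 0 :=
        sub_neg.mpr (lt_of_le_of_ne (hQle a) (fun he => h ((hkey a).2 he)))
      exact div_pos_of_neg_of_neg hQ hfneg
  · intro a
    by_cases h : f (fun i => Q i (a i) - ⨆ c : A i, Q i c) = 0
    · simp [h, (hkey a).1 h]
    · simp only [h, if_false]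
      rw [div_mul_cancel₀ _ h]; ring
end

section
/- Let A₁,…,A_N be finite nonempty sets and suppose utilities Q_i and a 'fixee' joint value Q_fixee satisfy IGM. Define the fixee advantage A_fixee(a) = Q_fixee(a) − max_b Q_fixee(b). Then for any positive w : (Π A_i) → ℝ_{>0} and any b ∈ ℝ, the fixed value Q_FIX(a) = w(a)·A_fixee(a) + b also satisfies IGM with the same individual utilities Q_i. -/
/-- QFIX satisfies IGM: if the fixee joint value satisfies IGM with the `Q_i`, then
`Q_FIX(a) = w(a)·A_fixee(a) + b` also satisfies IGM for any positive `w` and any `b`. -/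
theorem qfix_igm (N : ℕ) (A : Fin N → Type*)
    [∀ i, Fintype (A i)] [∀ i, Nonempty (A i)]
    (Q : ∀ i, A i → ℝ) (Qfixee : (∀ i, A i) → ℝ)
    (higm : {a : ∀ i, A i | ∀ a' : ∀ i, A i, Qfixee a' ≤ Qfixee a} =
        Set.pi Set.univ (fun i => {x : A i | ∀ c, Q i c ≤ Q i x}))
    (w : (∀ i, A i) → ℝ) (hw : ∀ a, 0 < w a) (b : ℝ)
    (Qfix : (∀ i, A i) → ℝ)
    (hQfix : ∀ a, Qfix a =
      w a * (Qfixee a - ⨆ a' : ∀ i, A i, Qfixee a') + b) :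
    {a : ∀ i, A i | ∀ a' : ∀ i, A i, Qfix a' ≤ Qfix a} =
      Set.pi Set.univ (fun i => {x : A i | ∀ c, Q i c ≤ Q i x}) := by
  obtain ⟨a₀, ha₀⟩ := Finite.exists_max Qfixee
  have hsup : (⨆ a' : ∀ i, A i, Qfixee a') = Qfixee a₀ :=
    le_antisymm (ciSup_le ha₀) (le_ciSup (Set.Finite.bddAbove (Set.finite_range _)) a₀)
  have hle : ∀ a, Qfix a ≤ b := by
    intro a
    rw [hQfix, hsup]
    nlinarith [hw a, ha₀ a]
  have heq : ∀ a, Qfix a = b ↔ Qfixee a = Qfixee a₀ := by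
    intro a
    rw [hQfix, hsup]
    constructor
    · intro h
      nlinarith [hw a, ha₀ a]
    · intro h; rw [h]; ring
  rw [← higm]
  ext a
  simp only [Set.mem_setOf_eq]
  constructor
  · intro h
    have hab : Qfix a = b := le_antisymm (hle a) (by
      have h0 := h a₀
      rw [(heq a₀).mpr rfl] at h0
      linarith)
    have hm : Qfixee a = Qfixee a₀ := (heq a).mp hab
    intro a'; rw [hm]; exact ha₀ a'
  · intro h
    have hm : Qfixee a = Qfixee a₀ := le_antisymm (ha₀ a) (h a₀)
    intro a'
    rw [(heq a).mpr hm]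
    exact hle a'
end

section
/- Let A₁,…,A_N be finite nonempty sets and suppose utilities Q_i and fixee joint value Q_fixee satisfy IGM. Then any joint value Q satisfying IGM with the Q_i can be written as Q(a) = w(a)·A_fixee(a) + b for some positive function w and constant b = max_a Q(a), where A_fixee(a) = Q_fixee(a) − max Q_fixee. (QFIX is IGM-complete in the finite setting.) -/
/-- QFIX completeness: any joint value `Q` satisfying IGM with the `Q_i` can be written
as `w(a)·A_fixee(a) + max Q` for a positive weight function `w`, where the fixee also
satisfies IGM with the `Q_i`. -/
theorem qfix_complete (N : ℕ) (A : Fin N → Type*)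
    [∀ i, Fintype (A i)] [∀ i, Nonempty (A i)]
    (Q : ∀ i, A i → ℝ) (Qfixee : (∀ i, A i) → ℝ)
    (higm_fixee : {a : ∀ i, A i | ∀ a' : ∀ i, A i, Qfixee a' ≤ Qfixee a} =
        Set.pi Set.univ (fun i => {x : A i | ∀ c, Q i c ≤ Q i x}))
    (Qj : (∀ i, A i) → ℝ)
    (higm : {a : ∀ i, A i | ∀ a' : ∀ i, A i, Qj a' ≤ Qj a} =
        Set.pi Set.univ (fun i => {x : A i | ∀ c, Q i c ≤ Q i x})) :
    ∃ w : (∀ i, A i) → ℝ, (∀ a, 0 < w a) ∧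
      ∀ a, Qj a = w a * (Qfixee a - ⨆ a' : ∀ i, A i, Qfixee a') +
        (⨆ a' : ∀ i, A i, Qj a') := by
  classical
  -- choose componentwise maximizers
  choose m hm using fun i => Finite.exists_max (Q i)
  have hmS : m ∈ Set.pi Set.univ (fun i => {x : A i | ∀ c, Q i c ≤ Q i x}) := by
    intro i _; exact hm i
  have hmF : ∀ a', Qfixee a' ≤ Qfixee m := by
    have := higm_fixee ▸ hmS
    exact this
  have hmJ : ∀ a', Qj a' ≤ Qj m := by
    have := higm ▸ hmS
    exact this
  have hsupF : (⨆ a' : ∀ i, A i, Qfixee a') = Qfixee m :=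
    le_antisymm (ciSup_le hmF) (le_ciSup (Finite.bddAbove_range _) m)
  have hsupJ : (⨆ a' : ∀ i, A i, Qj a') = Qj m :=
    le_antisymm (ciSup_le hmJ) (le_ciSup (Finite.bddAbove_range _) m)
  -- equivalence of maximizer sets
  have hiff : ∀ a, Qfixee a = Qfixee m ↔ Qj a = Qj m := by
    intro a
    constructor
    · intro h
      have haF : ∀ a', Qfixee a' ≤ Qfixee a := fun a' => h ▸ hmF a'
      have haS : a ∈ Set.pi Set.univ (fun i => {x : A i | ∀ c, Q i c ≤ Q i x}) :=
        higm_fixee ▸ haF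
      have haJ : ∀ a', Qj a' ≤ Qj a := (Set.ext_iff.1 higm a).2 haS
      exact le_antisymm (hmJ a) (haJ m)
    · intro h
      have haJ : ∀ a', Qj a' ≤ Qj a := fun a' => h ▸ hmJ a'
      have haS : a ∈ Set.pi Set.univ (fun i => {x : A i | ∀ c, Q i c ≤ Q i x}) :=
        higm ▸ haJ
      have haF : ∀ a', Qfixee a' ≤ Qfixee a := (Set.ext_iff.1 higm_fixee a).2 haS
      exact le_antisymm (hmF a) (haF m)
  refine ⟨fun a => if Qfixee a = Qfixee m then 1 else (Qj a - Qj m) / (Qfixee a - Qfixee m),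
    ?_, ?_⟩
  · intro a
    by_cases h : Qfixee a = Qfixee m
    · simp [h]
    · simp only [h, if_false]
      have h1 : Qfixee a - Qfixee m < 0 := sub_neg.2 (lt_of_le_of_ne (hmF a) h)
      have h2 : Qj a - Qj m < 0 :=
        sub_neg.2 (lt_of_le_of_ne (hmJ a) (fun hc => h ((hiff a).2 hc)))
      exact div_pos_of_neg_of_neg h2 h1
  · intro a
    rw [hsupF, hsupJ]
    by_cases h : Qfixee a = Qfixee m
    · simp [h, (hiff a).1 h]
    · simp only [h, if_false]
      have h1 : Qfixee a - Qfixee m ≠ 0 := sub_ne_zero.2 h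
      field_simp
      ring
end

section
/- Let A₁,…,A_N be finite nonempty sets and Q_i : A_i → ℝ with advantages u_i ≤ 0. For positive weight functions w_i : (Π A_j) → ℝ_{>0} and constant b, define Q_lin(a) = Σ_i w_i(a)·u_i(a_i) + b. Then Q_lin satisfies IGM with the Q_i: the joint argmax of Q_lin equals the product of the individual argmaxes, and max_a Q_lin(a) = b. -/
/-- QFIX-lin satisfies IGM: a weighted sum of individual advantages with positive,
action-dependent per-agent weights, plus a bias, has joint argmax equal to the
product of individual argmaxes, and its maximum is the bias. -/
theorem qfix_lin_igm (N : ℕ) (A : Fin N → Type*)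
    [∀ i, Fintype (A i)] [∀ i, Nonempty (A i)]
    (Q : ∀ i, A i → ℝ)
    (w : Fin N → (∀ j, A j) → ℝ) (hw : ∀ i a, 0 < w i a) (b : ℝ)
    (Qlin : (∀ i, A i) → ℝ)
    (hQlin : ∀ a, Qlin a =
      (∑ i, w i a * (Q i (a i) - ⨆ c : A i, Q i c)) + b) :
    ({a : ∀ i, A i | ∀ a' : ∀ i, A i, Qlin a' ≤ Qlin a} =
        Set.pi Set.univ (fun i => {x : A i | ∀ c, Q i c ≤ Q i x})) ∧
      (⨆ a : ∀ i, A i, Qlin a) = b := by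
  classical
  set M : ∀ i, ℝ := fun i => ⨆ c : A i, Q i c with hM
  have hbdd : ∀ i, BddAbove (Set.range (Q i)) := fun i => (Set.finite_range _).bddAbove
  choose x hx using fun i => Finite.exists_max (Q i)
  have hMx : ∀ i, M i = Q i (x i) := fun i =>
    le_antisymm (ciSup_le (hx i)) (le_ciSup (hbdd i) (x i))
  have hle : ∀ (a : ∀ i, A i) i, Q i (a i) - M i ≤ 0 := fun a i => by
    have := le_ciSup (hbdd i) (a i); simpa using sub_nonpos.mpr this
  have hQb : ∀ a, Qlin a ≤ b := fun a => by
    rw [hQlin]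
    have h : ∑ i, w i a * (Q i (a i) - M i) ≤ 0 :=
      Finset.sum_nonpos fun i _ => mul_nonpos_of_nonneg_of_nonpos (hw i a).le (hle a i)
    linarith
  have hQx : Qlin x = b := by
    rw [hQlin]
    have h : ∀ i ∈ Finset.univ, w i x * (Q i (x i) - M i) = 0 := fun i _ => by
      rw [hMx i]; ring
    rw [Finset.sum_congr rfl h]; simp
  have key : ∀ a : ∀ i, A i, (∀ a', Qlin a' ≤ Qlin a) ↔ ∀ i, ∀ c, Q i c ≤ Q i (a i) := by
    intro a
    constructor
    · intro h i c
      have hab : Qlin a = b := le_antisymm (hQb a) (hQx ▸ h x)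
      have hsum : ∑ i, w i a * (Q i (a i) - M i) = 0 := by
        rw [hQlin] at hab; linarith
      have hzero := (Finset.sum_eq_zero_iff_of_nonpos
        (fun i _ => mul_nonpos_of_nonneg_of_nonpos (hw i a).le (hle a i))).mp hsum
        i (Finset.mem_univ i)
      have hQi : Q i (a i) = M i := by
        rcases mul_eq_zero.mp hzero with h1 | h1
        · exact absurd h1 (hw i a).ne'
        · linarith [sub_eq_zero.mp h1]
      calc Q i c ≤ M i := le_ciSup (hbdd i) c
        _ = Q i (a i) := hQi.symm
    · intro h a'
      have ha : Qlin a = b := by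
        rw [hQlin]
        have h' : ∀ i ∈ Finset.univ, w i a * (Q i (a i) - M i) = 0 := fun i _ => by
          have : Q i (a i) = M i :=
            le_antisymm (le_ciSup (hbdd i) (a i)) (ciSup_le fun c => h i c)
          rw [this]; ring
        rw [Finset.sum_congr rfl h']; simp
      exact ha ▸ hQb a'
  constructor
  · ext a
    simp only [Set.mem_setOf_eq, Set.mem_pi, Set.mem_univ, forall_true_left]
    exact (key a).trans (by simp [Set.mem_setOf_eq])
  · exact le_antisymm (ciSup_le hQb) (hQx ▸ le_ciSup ((Set.finite_range Qlin).bddAbove) x)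
end

section
/- Let A₁,…,A_N be finite nonempty sets and Q_i : A_i → ℝ with advantages u_i. Any joint value Q satisfying IGM with the Q_i is representable in the QFIX-lin form: there exist positive functions w_i : (Π A_j) → ℝ_{>0} and b ∈ ℝ with Q(a) = Σ_i w_i(a)·u_i(a_i) + b for all a. -/
/-- QFIX-lin completeness: any joint value satisfying IGM with the `Q_i` is
representable as a positively-weighted sum of individual advantages plus a bias. -/
theorem qfix_lin_complete (N : ℕ) (A : Fin N → Type*)
    [∀ i, Fintype (A i)] [∀ i, Nonempty (A i)]
    (Q : ∀ i, A i → ℝ) (Qj : (∀ i, A i) → ℝ)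
    (higm : {a : ∀ i, A i | ∀ a' : ∀ i, A i, Qj a' ≤ Qj a} =
        Set.pi Set.univ (fun i => {x : A i | ∀ c, Q i c ≤ Q i x})) :
    ∃ (w : Fin N → (∀ j, A j) → ℝ) (b : ℝ), (∀ i a, 0 < w i a) ∧
      ∀ a, Qj a = (∑ i, w i a * (Q i (a i) - ⨆ c : A i, Q i c)) + b := by
  classical
  have hle : ∀ i (c : A i), Q i c ≤ ⨆ c : A i, Q i c := fun i c =>
    le_ciSup (Finite.bddAbove_range _) c
  have hmaxiff : ∀ i (x : A i), (∀ c, Q i c ≤ Q i x) ↔ Q i x = ⨆ c : A i, Q i c := by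
    intro i x
    constructor
    · intro h; exact le_antisymm (hle i x) (ciSup_le h)
    · intro h c; rw [h]; exact hle i c
  obtain ⟨astar, hastar⟩ := Finite.exists_max Qj
  set b := Qj astar with hb
  have hQb : ∀ a, Qj a ≤ b := hastar
  have hmem_iff : ∀ a : ∀ i, A i,
      (∀ a', Qj a' ≤ Qj a) ↔ ∀ i, ∀ c, Q i c ≤ Q i (a i) := by
    intro a
    have := Set.ext_iff.mp higm a
    simpa [Set.mem_pi] using this
  set S : (∀ i, A i) → ℝ := fun a => ∑ i, (Q i (a i) - ⨆ c : A i, Q i c) with hS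
  have hterm : ∀ (a : ∀ i, A i) (i : Fin N), Q i (a i) - (⨆ c : A i, Q i c) ≤ 0 :=
    fun a i => sub_nonpos.mpr (hle i (a i))
  have hSzero : ∀ a, S a = 0 → Qj a = b := by
    intro a h0
    have hz := (Finset.sum_eq_zero_iff_of_nonpos (fun i _ => hterm a i)).mp h0
    have hmax : ∀ i, ∀ c, Q i c ≤ Q i (a i) := by
      intro i
      apply (hmaxiff i (a i)).mpr
      have := hz i (Finset.mem_univ i)
      linarith
    exact le_antisymm (hQb a) ((hmem_iff a).mpr hmax astar)
  have hSneg : ∀ a, S a ≠ 0 → S a < 0 := fun a h =>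
    lt_of_le_of_ne (Finset.sum_nonpos (fun i _ => hterm a i)) h
  have hQlt : ∀ a, S a ≠ 0 → Qj a < b := by
    intro a h
    rcases lt_or_eq_of_le (hQb a) with h' | h'
    · exact h'
    · exfalso
      apply h
      have hmax : ∀ a', Qj a' ≤ Qj a := fun a' => h' ▸ hQb a'
      have h1 := (hmem_iff a).mp hmax
      have h2 : ∀ i, Q i (a i) = ⨆ c : A i, Q i c :=
        fun i => (hmaxiff i (a i)).mp (h1 i)
      simp [hS, h2]
  refine ⟨fun _ a => if S a = 0 then 1 else (Qj a - b) / S a, b, ?_, ?_⟩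
  · intro i a
    by_cases h : S a = 0
    · simp [h]
    · simp only [h, if_false]
      exact div_pos_of_neg_of_neg (sub_neg.mpr (hQlt a h)) (hSneg a h)
  · intro a
    by_cases h : S a = 0
    · simp only [h, if_true, one_mul]
      rw [hSzero a h]
      have : (∑ i, (Q i (a i) - ⨆ c : A i, Q i c)) = S a := rfl
      rw [this, h]; ring
    · simp only [h, if_false]
      rw [← Finset.mul_sum]
      have : (∑ i, (Q i (a i) - ⨆ c : A i, Q i c)) = S a := rfl
      rw [this, div_mul_cancel₀ _ h]
      ring
end

section
/- Let A₁,…,A_N be finite nonempty sets and suppose utilities Q_i and fixee Q_fixee satisfy IGM. For any w : (Π A_i) → ℝ with w(a) > −1 for all a, and any b ∈ ℝ, the additive fixed value Q(a) = Q_fixee(a) + w(a)·A_fixee(a) + b satisfies IGM with the Q_i, where A_fixee(a) = Q_fixee(a) − max Q_fixee. -/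
/-- Q+FIX satisfies IGM: if the fixee satisfies IGM with the `Q_i`, then
`Q(a) = Q_fixee(a) + w(a)·A_fixee(a) + b` with `w(a) > -1` also satisfies IGM. -/
theorem qplusfix_igm (N : ℕ) (A : Fin N → Type*)
    [∀ i, Fintype (A i)] [∀ i, Nonempty (A i)]
    (Q : ∀ i, A i → ℝ) (Qfixee : (∀ i, A i) → ℝ)
    (higm : {a : ∀ i, A i | ∀ a' : ∀ i, A i, Qfixee a' ≤ Qfixee a} =
        Set.pi Set.univ (fun i => {x : A i | ∀ c, Q i c ≤ Q i x}))
    (w : (∀ i, A i) → ℝ) (hw : ∀ a, -1 < w a) (b : ℝ)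
    (Qj : (∀ i, A i) → ℝ)
    (hQj : ∀ a, Qj a =
      Qfixee a + w a * (Qfixee a - ⨆ a' : ∀ i, A i, Qfixee a') + b) :
    {a : ∀ i, A i | ∀ a' : ∀ i, A i, Qj a' ≤ Qj a} =
      Set.pi Set.univ (fun i => {x : A i | ∀ c, Q i c ≤ Q i x}) := by
  set M : ℝ := ⨆ a' : ∀ i, A i, Qfixee a' with hM
  obtain ⟨a₀, ha₀⟩ := Finite.exists_max Qfixee
  have hle : ∀ a, Qfixee a ≤ M := fun a =>
    le_ciSup (Finite.bddAbove_range _) a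
  have hMeq : M = Qfixee a₀ := le_antisymm (ciSup_le ha₀) (hle a₀)
  have key : ∀ a, (∀ a', Qfixee a' ≤ Qfixee a) ↔ Qfixee a = M := by
    intro a
    constructor
    · intro h
      exact le_antisymm (hle a) (hMeq ▸ h a₀)
    · intro h a'
      exact h ▸ hle a'
  -- Qj a = (1 + w a) * (Qfixee a - M) + (M + b)
  have hQj' : ∀ a, Qj a = (1 + w a) * (Qfixee a - M) + (M + b) := by
    intro a; rw [hQj a]; ring
  have hub : ∀ a, Qj a ≤ M + b := by
    intro a
    rw [hQj' a]
    have h1 : (1 + w a) * (Qfixee a - M) ≤ 0 :=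
      mul_nonpos_of_nonneg_of_nonpos (by linarith [hw a]) (by linarith [hle a])
    linarith
  have hQja₀ : Qj a₀ = M + b := by
    rw [hQj' a₀, hMeq]; ring
  rw [← higm]
  ext a
  simp only [Set.mem_setOf_eq]
  constructor
  · intro h
    rw [key a]
    have h1 : M + b ≤ Qj a := hQja₀ ▸ h a₀
    have h2 : (1 + w a) * (Qfixee a - M) = 0 := by
      have := hQj' a; linarith [hub a]
    rcases mul_eq_zero.mp h2 with h3 | h3
    · linarith [hw a]
    · linarith
  · intro h a'
    have := (key a).mp h
    rw [hQj' a, this]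
    simpa using hub a'
end

section
/- Let A₁,…,A_N be finite nonempty sets, S a finite nonempty state set, and suppose Q_i : A_i → ℝ satisfy, together with f, w : S × (Π A_i) → ℝ_{>0}, b : S → ℝ, and f : ℝ_{≤0}^N → ℝ_{≤0} vanishing exactly at 0, the stateful construction Q(s,a) = w(s,a)·f(u₁(a₁),…,u_N(a_N)) + b(s). Then for every probability distribution p on S, the marginalized value a ↦ Σ_s p(s)·Q(s,a) attains its maximum exactly on the product of the individual argmax sets of the Q_i (stateful IGM). -/
/-- Stateful IGM: for the stateful construction
`Q(s,a) = w(s,a)·f(u(a)) + b(s)` with positive weights and nonpositive aggregator `f`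
vanishing exactly at zero, the marginalized value under any state distribution attains
its maximum exactly on the product of the individual argmax sets. -/
theorem stateful_qigm_igm (N : ℕ) (A : Fin N → Type*)
    [∀ i, Fintype (A i)] [∀ i, Nonempty (A i)]
    (S : Type*) [Fintype S] [Nonempty S]
    (Q : ∀ i, A i → ℝ) (f : (Fin N → ℝ) → ℝ)
    (hf_nonpos : ∀ x : Fin N → ℝ, (∀ i, x i ≤ 0) → f x ≤ 0)
    (hf_zero : ∀ x : Fin N → ℝ, (∀ i, x i ≤ 0) → (f x = 0 ↔ ∀ i, x i = 0))
    (w : S → (∀ i, A i) → ℝ) (hw : ∀ s a, 0 < w s a) (b : S → ℝ)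
    (Qs : S → (∀ i, A i) → ℝ)
    (hQs : ∀ s a, Qs s a =
      w s a * f (fun i => Q i (a i) - ⨆ c : A i, Q i c) + b s)
    (p : S → ℝ) (hp : ∀ s, 0 ≤ p s) (hp1 : ∑ s, p s = 1) :
    {a : ∀ i, A i | ∀ a' : ∀ i, A i,
        (∑ s, p s * Qs s a') ≤ ∑ s, p s * Qs s a} =
      Set.pi Set.univ (fun i => {x : A i | ∀ c, Q i c ≤ Q i x}) := by
  set u : (∀ i, A i) → Fin N → ℝ :=
    fun a i => Q i (a i) - ⨆ c : A i, Q i c with hu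
  have hbdd : ∀ i : Fin N, BddAbove (Set.range (Q i)) :=
    fun i => Set.Finite.bddAbove (Set.finite_range _)
  have hu_le : ∀ a i, u a i ≤ 0 := by
    intro a i
    exact sub_nonpos.mpr (le_ciSup (hbdd i) (a i))
  have hzero : ∀ (a : ∀ i, A i) (i : Fin N),
      u a i = 0 ↔ ∀ c, Q i c ≤ Q i (a i) := by
    intro a i
    rw [sub_eq_zero]
    constructor
    · intro h c
      rw [h]
      exact le_ciSup (hbdd i) c
    · intro h
      exact le_antisymm (le_ciSup (hbdd i) (a i)) (ciSup_le h)
  -- positivity of the aggregated weight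
  obtain ⟨s₀, hs₀⟩ : ∃ s, p s ≠ 0 := by
    by_contra h
    push_neg at h
    simp [h] at hp1
  have hC : ∀ a, 0 < ∑ s, p s * w s a := by
    intro a
    refine Finset.sum_pos' (fun s _ => mul_nonneg (hp s) (hw s a).le)
      ⟨s₀, Finset.mem_univ _, mul_pos (lt_of_le_of_ne (hp s₀) (Ne.symm hs₀)) (hw s₀ a)⟩
  have hV : ∀ a, ∑ s, p s * Qs s a
      = (∑ s, p s * w s a) * f (u a) + ∑ s, p s * b s := by
    intro a
    simp only [hQs, mul_add, ← mul_assoc, Finset.sum_add_distrib, ← Finset.sum_mul]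
    rfl
  -- a best point
  obtain ⟨astar, hastar⟩ : ∃ a : ∀ i, A i, ∀ i c, Q i c ≤ Q i (a i) := by
    have h : ∀ i : Fin N, ∃ x : A i, ∀ c, Q i c ≤ Q i x := by
      intro i
      obtain ⟨x, hx⟩ := Finite.exists_max (Q i)
      exact ⟨x, hx⟩
    exact ⟨fun i => (h i).choose, fun i => (h i).choose_spec⟩
  have hfstar : f (u astar) = 0 :=
    (hf_zero _ (hu_le astar)).mpr fun i => (hzero astar i).mpr (hastar i)
  ext a
  simp only [Set.mem_setOf_eq, Set.mem_pi, Set.mem_univ, forall_true_left]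
  constructor
  · intro ha i c
    have h1 := ha astar
    rw [hV, hV, hfstar] at h1
    have hfa_le := hf_nonpos _ (hu_le a)
    have hCa := hC a
    have hfa : f (u a) = 0 := by nlinarith
    exact (hzero a i).mp ((hf_zero _ (hu_le a)).mp hfa i) c
  · intro ha a'
    have hfa : f (u a) = 0 :=
      (hf_zero _ (hu_le a)).mpr fun i => (hzero a i).mpr (ha i)
    rw [hV, hV, hfa]
    have hfa' := hf_nonpos _ (hu_le a')
    have := hC a'
    nlinarith
end
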